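/- arXiv:1309.3779 — 3 statements merged into one kernel-verified Lean document; each statement's English description precedes it below -/
import Mathlib

section
/- Let (W,S) be a Coxeter system with a fixed total order on S, M a ℤ-module, and λ : A_Γ → Aut(M) a representation of the associated Artin group. Define C^k = ⊕_T M·e_T, the sum over subsets T ⊆ S with |T| = k and W_T finite, and define δ : C^k → C^{k+1} by δ(a·e_T) = Σ_{s ∈ S∖T, W_{T∪{s}} finite} (−1)^{σ(s,T)+1} Σ_w (−1)^{ℓ(w)} λ(ψ(w))(a)·e_{T∪{s}}, where w ranges over the minimal-length representatives of the cosets in W_{T∪{s}}/W_T and σ(s,T) is the number of elements of T strictly smaller than s. Then δ ∘ δ = 0, i.e. (C^*, δ) is a cochain complex. -/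
/-!
STATEMENT 5: The Salvetti complex (C^*, δ) of a Coxeter system (W,S) with coefficients
in a representation λ : A_Γ → Aut(M) is a cochain complex: δ ∘ δ = 0.
-/

/-- The alternating word `s t s t ⋯` with `m` factors, as an element of the free group. -/
def braidWord {B : Type*} (s t : B) (m : ℕ) : FreeGroup B :=
  ((List.range m).map (fun i => if i % 2 = 0 then FreeGroup.of s else FreeGroup.of t)).prod

/-- The Artin relations associated to a Coxeter matrix `M`. -/
def artinRels {B : Type*} (M : CoxeterMatrix B) : Set (FreeGroup B) :=
  {r | ∃ s t : B, s ≠ t ∧ M s t ≠ 0 ∧ r = braidWord s t (M s t) * (braidWord t s (M s t))⁻¹}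

/-- The Artin group associated to a Coxeter matrix `M`. -/
def ArtinGroup {B : Type*} (M : CoxeterMatrix B) : Type _ := PresentedGroup (artinRels M)

instance {B : Type*} (M : CoxeterMatrix B) : Group (ArtinGroup M) :=
  QuotientGroup.Quotient.group _

/-- The standard generator `g_s` of the Artin group. -/
def artinGen {B : Type*} (M : CoxeterMatrix B) (s : B) : ArtinGroup M :=
  PresentedGroup.of s

/-- `ψ : W → A_Γ` is Matsumoto's section. -/
def IsMatsumotoSection {B : Type*} {W : Type*} [Group W] {M : CoxeterMatrix B}
    (cs : CoxeterSystem M W) (ψ : W → ArtinGroup M) : Prop :=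
  ∀ (w : W) (ω : List B), cs.IsReduced ω → cs.wordProd ω = w →
    ψ w = (ω.map (artinGen M)).prod

/-- The indexing set of the Salvetti complex: subsets `T ⊆ S` such that the standard
parabolic subgroup `W_T` is finite. -/
def SalIndex {B W : Type*} [Group W] {M : CoxeterMatrix B} (cs : CoxeterSystem M W) :
    Type _ :=
  {T : Finset B // (↑(Subgroup.closure (cs.simple '' (T : Set B))) : Set W).Finite}

/-- The total module of the Salvetti complex `C^* = ⊕_T M·e_T`; an element is recorded
by its coordinates: `c T` is the coefficient of the generator `e_T`.  The grading is
given by the cardinality of `T`. -/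
def SalC {B W : Type*} [Group W] {M : CoxeterMatrix B} (cs : CoxeterSystem M W)
    (Mod : Type*) : Type _ := SalIndex cs → Mod

instance {B W : Type*} [Group W] {M : CoxeterMatrix B} (cs : CoxeterSystem M W)
    (Mod : Type*) [AddCommGroup Mod] : AddCommGroup (SalC cs Mod) := Pi.addCommGroup

lemma salIndex_erase {B W : Type*} [Group W] {M : CoxeterMatrix B}
    (cs : CoxeterSystem M W) (U : SalIndex cs) (s : B) [DecidableEq B] :
    (↑(Subgroup.closure (cs.simple '' ((U.1.erase s : Finset B) : Set B))) : Set W).Finite :=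
  U.2.subset (SetLike.coe_subset_coe.mpr (Subgroup.closure_mono
    (Set.image_mono (Finset.coe_subset.mpr (Finset.erase_subset s U.1)))))

/-- The set of minimal-length representatives of the cosets in `W_{T∪{s}}/W_T`. -/
def minCosetReps {B W : Type*} [Group W] {M : CoxeterMatrix B} (cs : CoxeterSystem M W)
    (T : Finset B) (s : B) : Set W :=
  {w : W | w ∈ Subgroup.closure (cs.simple '' (insert s (T : Set B))) ∧
    ∀ v ∈ Subgroup.closure (cs.simple '' (T : Set B)),
      cs.length w ≤ cs.length (w * v)}

/-- The Salvetti coboundary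
`δ(a·e_T) = Σ_{s ∉ T, |W_{T∪{s}}| < ∞} (−1)^{σ(s,T)+1} Σ_w (−1)^{ℓ(w)} λ(ψ(w))(a)·e_{T∪{s}}`,
written in coordinates: the coefficient of `δc` at `U` collects, for each `s ∈ U`, the
contribution of the coefficient of `c` at `T = U ∖ {s}`.  Here `σ(s,T)` is the number of
elements of `T` strictly smaller than `s`, and `w` ranges over the minimal-length
representatives of the cosets in `W_U/W_T`. -/
noncomputable def salD {B W : Type*} [LinearOrder B] [Group W] {M : CoxeterMatrix B}
    (cs : CoxeterSystem M W) (ψ : W → ArtinGroup M)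
    {Mod : Type*} [AddCommGroup Mod] (lam : ArtinGroup M →* Multiplicative (AddAut Mod)) :
    SalC cs Mod → SalC cs Mod := fun c U =>
  ∑ s ∈ U.1, (-1 : ℤ) ^ ((((U.1.erase s).filter (fun t => t < s)).card) + 1) •
    ∑ᶠ w ∈ minCosetReps cs (U.1.erase s) s,
      (-1 : ℤ) ^ (cs.length w) • (Multiplicative.toAdd (lam (ψ w))) (c ⟨U.1.erase s, salIndex_erase cs U s⟩)


/-!
Expanding `δδc` at `U` gives, for every ordered pair `s ≠ t` in `U`, a sign times a double sum
over minimal coset representatives `w` of `W_U / W_{U∖s}` and `v` of `W_{U∖s} / W_{U∖{s,t}}`.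
Minimal representatives multiply without cancellation, `ℓ(wv) = ℓ(w) + ℓ(v)`, so `ψ(wv) = ψ(w)ψ(v)`,
and `(w, v) ↦ wv` is a bijection onto the minimal representatives of `W_U / W_{U∖{s,t}}`. Hence
the double sum is symmetric in `s` and `t`, while the sign is antisymmetric, and the terms cancel
in pairs. Length additivity comes from the exchange condition, which is proved with the classical
action of `W` on `W × {±1}` that counts occurrences of a reflection in inversion sequences.
-/

theorem List.even_count_of_getElem_add_eq {α : Type*} [BEq α] (L : List α) (p : ℕ)
    (hL : L.length = 2 * p) (h : ∀ k (hk : k < p), L[k + p]'(by omega) = L[k]'(by omega))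
    (a : α) : Even (L.count a) := by
  have hdrop : L.drop p = L.take p := by
    apply List.ext_getElem (by simp; omega)
    intro k h1 h2
    simp only [List.getElem_drop, List.getElem_take]
    simpa [add_comm] using h k (by simp at h2; omega)
  rw [← List.take_append_drop p L, hdrop, List.count_append]
  exact ⟨_, rfl⟩

theorem finsum_mem_set_prod {α β N : Type*} [AddCommMonoid N] {s : Set α} {t : Set β}
    (hs : s.Finite) (ht : t.Finite) (f : α → β → N) :
    ∑ᶠ p ∈ s ×ˢ t, f p.1 p.2 = ∑ᶠ a ∈ s, ∑ᶠ b ∈ t, f a b := by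
  rw [← hs.coe_toFinset, ← ht.coe_toFinset, ← Finset.coe_product, finsum_mem_coe_finset,
    finsum_mem_coe_finset, Finset.sum_product]
  simp_rw [finsum_mem_coe_finset]

theorem Finset.sum_sum_erase_eq_zero_of_antisymm {α N : Type*} [DecidableEq α] [AddCommGroup N]
    (s : Finset α) (f : α → α → N) (h : ∀ a ∈ s, ∀ b ∈ s, a ≠ b → f b a = -f a b) :
    ∑ a ∈ s, ∑ b ∈ s.erase a, f a b = 0 := by
  rw [Finset.sum_sigma']
  refine Finset.sum_involution (fun x _ => ⟨x.2, x.1⟩) ?_ ?_ ?_ (fun _ _ => rfl)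
  · rintro ⟨a, b⟩ hab
    simp only [Finset.mem_sigma, Finset.mem_erase] at hab
    simp [h a hab.1 b hab.2.2 (Ne.symm hab.2.1)]
  · rintro ⟨a, b⟩ hab - hba
    simp only [Finset.mem_sigma, Finset.mem_erase] at hab
    exact hab.2.1 (congrArg Sigma.fst hba)
  · rintro ⟨a, b⟩ hab
    simp only [Finset.mem_sigma, Finset.mem_erase] at hab ⊢
    exact ⟨hab.2.2, Ne.symm hab.2.1, hab.1⟩

namespace CoxeterSystem

variable {B W : Type*} [Group W] {M : CoxeterMatrix B} (cs : CoxeterSystem M W)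

local prefix:100 "s" => cs.simple
local prefix:100 "π" => cs.wordProd
local prefix:100 "ℓ" => cs.length
local prefix:100 "ris" => cs.rightInvSeq

theorem simple_mul_mul_simple_eq_simple_iff (i : B) (t : W) :
    s i * t * s i = s i ↔ t = s i := by
  constructor
  · intro h
    simpa [mul_assoc] using congrArg (s i * · * s i) h
  · rintro rfl
    simp

theorem prod_map_alternatingWord {G : Type*} [Monoid G] (f : B → G) (i i' : B) (m : ℕ) :
    ((alternatingWord i i' (2 * m)).map f).prod = (f i * f i') ^ m := by
  induction m with
  | zero => simp [alternatingWord]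
  | succ m ih =>
    rw [show 2 * (m + 1) = 2 * m + 1 + 1 by ring, alternatingWord_succ', alternatingWord_succ']
    simp [ih, pow_succ', mul_assoc]

theorem reverse_alternatingWord (i i' : B) (m : ℕ) :
    (alternatingWord i i' (2 * m)).reverse = alternatingWord i' i (2 * m) := by
  apply List.ext_getElem (by simp)
  intro k h1 h2
  simp only [List.length_reverse, length_alternatingWord] at h1 h2
  rw [List.getElem_reverse, getElem_alternatingWord _ _ _ _ (by simp; omega),
    getElem_alternatingWord _ _ _ _ h2]
  simp only [length_alternatingWord]
  have : Even (2 * m + (2 * m - 1 - k)) ↔ ¬ Even (2 * m + k) := by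
    rw [Nat.even_add, Nat.even_add, Nat.even_sub (by omega), Nat.even_sub (by omega)]
    simp [parity_simps]
  by_cases hk : Even (2 * m + k) <;> simp_all

section SignRepresentation

open scoped Classical

/-- After reversal this is the left inversion sequence of a braid word, which is periodic of
period `m(i, i')`. -/
theorem even_count_rightInvSeq_alternatingWord (i i' : B) (t : W) :
    Even ((ris (alternatingWord i i' (2 * M i i'))).count t) := by
  rw [← reverse_alternatingWord, rightInvSeq_reverse, List.count_reverse]
  apply List.even_count_of_getElem_add_eq _ (M i i') (by simp)
  intro k hk
  rw [getElem_leftInvSeq_alternatingWord _ _ _ _ _ (by omega),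
    getElem_leftInvSeq_alternatingWord _ _ _ _ _ (by omega),
    prod_alternatingWord_eq_mul_pow, prod_alternatingWord_eq_mul_pow]
  simp [show (2 * (k + M i i') + 1) / 2 = k + M i i' by omega,
    show (2 * k + 1) / 2 = k by omega, pow_add]

noncomputable def signFlip (i : B) : Equiv.Perm (W × ℤˣ) :=
  Function.Involutive.toPerm (fun p => (s i * p.1 * s i, if p.1 = s i then -p.2 else p.2)) <| by
    rintro ⟨t, ε⟩
    by_cases h : t = s i <;> simp [h, mul_assoc, mul_eq_one_iff_eq_inv]

theorem signFlip_apply (i : B) (t : W) (ε : ℤˣ) :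
    cs.signFlip i (t, ε) = (s i * t * s i, if t = s i then -ε else ε) := rfl

theorem prod_map_signFlip_apply (ω : List B) (t : W) (ε : ℤˣ) :
    (ω.map cs.signFlip).prod (t, ε) = (π ω * t * (π ω)⁻¹, (-1) ^ (ris ω).count t * ε) := by
  induction ω with
  | nil => simp
  | cons i ω ih =>
    have hcond : π ω * t * (π ω)⁻¹ = s i ↔ t = (π ω)⁻¹ * s i * π ω := by
      constructor <;> intro h <;> [rw [← h]; rw [h]] <;> group
    rw [List.map_cons, List.prod_cons, Equiv.Perm.mul_apply, ih, signFlip_apply, hcond]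
    refine Prod.ext (by simp [wordProd_cons, mul_assoc]) ?_
    simp only [rightInvSeq, List.count_cons, beq_iff_eq]
    by_cases h : t = (π ω)⁻¹ * s i * π ω
    · simp [h, pow_succ]
    · simp [h, Ne.symm h]

theorem isLiftable_signFlip : M.IsLiftable cs.signFlip := by
  intro i i'
  rw [← prod_map_alternatingWord]
  ext ⟨t, ε⟩ : 1
  rw [prod_map_signFlip_apply, (even_count_rightInvSeq_alternatingWord cs i i' t).neg_one_pow,
    prod_alternatingWord_eq_mul_pow]
  simp [simple_mul_simple_pow]

noncomputable def signRep : W →* Equiv.Perm (W × ℤˣ) :=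
  cs.lift ⟨cs.signFlip, cs.isLiftable_signFlip⟩

theorem signRep_wordProd (ω : List B) : cs.signRep (π ω) = (ω.map cs.signFlip).prod := by
  rw [wordProd, map_list_prod, List.map_map]
  exact congrArg List.prod (List.map_congr_left fun i _ => cs.lift_apply_simple _ i)

theorem neg_one_pow_count_rightInvSeq_eq {ω ω' : List B} (h : π ω = π ω') (t : W) :
    (-1 : ℤˣ) ^ (ris ω).count t = (-1) ^ (ris ω').count t := by
  simpa [signRep_wordProd, prod_map_signFlip_apply] using
    congrArg (fun g => (cs.signRep g (t, 1)).2) h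

/-- Comparing with `ω' ++ [i]` for a reduced word `ω'` of `π ω * s i`, in whose right inversion
sequence `s i` occurs exactly once, `s i` occurs an odd number of times in `ris ω`. -/
theorem simple_mem_rightInvSeq_of_length_lt {ω : List B} {i : B} (h : ℓ (π ω * s i) < ℓ (π ω)) :
    s i ∈ ris ω := by
  obtain ⟨ω', hred, hω'⟩ := cs.exists_isReduced (π ω * s i)
  have hπ : π (ω'.concat i) = π ω := by
    rw [wordProd_concat, ← hω', simple_mul_simple_cancel_right]
  have hnot : s i ∉ ris ω' := fun hmem => by
    have := (cs.isRightInversion_of_mem_rightInvSeq hred hmem).2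
    rw [← hω', simple_mul_simple_cancel_right] at this
    omega
  have hcount : (ris (ω'.concat i)).count (s i) = 1 := by
    rw [rightInvSeq_concat, List.concat_eq_append, List.count_append, List.count_singleton_self,
      List.count_eq_zero_of_not_mem]
    simp only [List.mem_map, MulAut.conj_apply, inv_simple, not_exists, not_and]
    intro x hx hconj
    exact hnot ((cs.simple_mul_mul_simple_eq_simple_iff i x).mp hconj ▸ hx)
  by_contra hmem
  have := cs.neg_one_pow_count_rightInvSeq_eq hπ (s i)
  rw [hcount, List.count_eq_zero_of_not_mem hmem] at this
  exact absurd this (by decide)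

end SignRepresentation

theorem exists_wordProd_eraseIdx_eq_mul_simple {ω : List B} {i : B}
    (h : ℓ (π ω * s i) < ℓ (π ω)) : ∃ j < ω.length, π (ω.eraseIdx j) = π ω * s i := by
  obtain ⟨j, hj, hget⟩ := List.mem_iff_getElem.mp (cs.simple_mem_rightInvSeq_of_length_lt h)
  refine ⟨j, by simpa using hj, ?_⟩
  rw [← wordProd_mul_getD_rightInvSeq, List.getD_eq_getElem _ _ hj, hget]

theorem length_wordProd_eraseIdx_lt {ω : List B} (hω : cs.IsReduced ω) {j : ℕ}
    (hj : j < ω.length) : ℓ (π (ω.eraseIdx j)) < ℓ (π ω) := by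
  have := cs.length_wordProd_le (ω.eraseIdx j)
  rw [List.length_eraseIdx_of_lt hj] at this
  rw [hω.eq]
  omega

def parabolic (X : Set B) : Subgroup W := Subgroup.closure (cs.simple '' X)

theorem parabolic_mono {X Y : Set B} (h : Y ⊆ X) : cs.parabolic Y ≤ cs.parabolic X :=
  Subgroup.closure_mono (Set.image_mono h)

theorem simple_mem_parabolic {X : Set B} {i : B} (hi : i ∈ X) : s i ∈ cs.parabolic X :=
  Subgroup.subset_closure ⟨i, hi, rfl⟩

theorem wordProd_mem_parabolic {X : Set B} {ω : List B} (hω : ∀ i ∈ ω, i ∈ X) :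
    π ω ∈ cs.parabolic X :=
  list_prod_mem (by simpa using fun i hi => cs.simple_mem_parabolic (hω i hi))

theorem exists_word_of_mem_parabolic {X : Set B} {w : W} (hw : w ∈ cs.parabolic X) :
    ∃ ω : List B, (∀ i ∈ ω, i ∈ X) ∧ π ω = w := by
  induction hw using Subgroup.closure_induction with
  | mem x hx =>
    obtain ⟨i, hi, rfl⟩ := hx
    exact ⟨[i], by simpa using hi, cs.wordProd_singleton i⟩
  | one => exact ⟨[], by simp, cs.wordProd_nil⟩
  | mul x y _ _ ihx ihy =>
    obtain ⟨ωx, hx, rfl⟩ := ihx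
    obtain ⟨ωy, hy, rfl⟩ := ihy
    exact ⟨ωx ++ ωy, by simpa using fun i hi => hi.elim (hx i) (hy i), cs.wordProd_append ωx ωy⟩
  | inv x _ ihx =>
    obtain ⟨ωx, hx, rfl⟩ := ihx
    exact ⟨ωx.reverse, by simpa using hx, cs.wordProd_reverse ωx⟩

theorem exists_shortest_word_of_mem_parabolic {X : Set B} {w : W} (hw : w ∈ cs.parabolic X) :
    ∃ ω : List B, (∀ i ∈ ω, i ∈ X) ∧ π ω = w ∧
      ∀ ω' : List B, (∀ i ∈ ω', i ∈ X) → π ω' = w → ω.length ≤ ω'.length := by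
  obtain ⟨ω, ⟨hωX, hω⟩, hmin⟩ := (InvImage.wf List.length wellFounded_lt).has_min
    {ω | (∀ i ∈ ω, i ∈ X) ∧ π ω = w} (cs.exists_word_of_mem_parabolic hw)
  exact ⟨ω, hωX, hω, fun ω' hX h => not_lt.mp (hmin ω' ⟨hX, h⟩)⟩

theorem exists_shortest_in_coset (X : Set B) (u : W) :
    ∃ p ∈ cs.parabolic X, ∀ q ∈ cs.parabolic X, ℓ (u * p) ≤ ℓ (u * p * q) := by
  obtain ⟨p, hp, hmin⟩ := (InvImage.wf (fun p => ℓ (u * p)) wellFounded_lt).has_min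
    (cs.parabolic X) ⟨1, one_mem _⟩
  refine ⟨p, hp, fun q hq => not_lt.mp fun hlt => hmin (p * q) (mul_mem hp hq) ?_⟩
  simpa [InvImage, mul_assoc] using hlt

/-- If `ℓ (w * π τ * s i)` dropped, the letter deleted by the exchange condition could lie
neither in a reduced word of `w`, by minimality of `w` in its coset, nor in `τ`, by minimality
of `τ`. -/
theorem length_mul_wordProd_of_shortest {X : Set B} {w : W}
    (hw : ∀ u ∈ cs.parabolic X, ℓ w ≤ ℓ (w * u)) {τ : List B} (hτX : ∀ i ∈ τ, i ∈ X)
    (hτ : ∀ τ' : List B, (∀ i ∈ τ', i ∈ X) → π τ' = π τ → τ.length ≤ τ'.length) :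
    ℓ (w * π τ) = ℓ w + τ.length := by
  induction τ using List.reverseRecOn with
  | nil => simp
  | append_singleton τ i ih =>
    have hiX : i ∈ X := hτX i (by simp)
    have hτX' : ∀ j ∈ τ, j ∈ X := fun j hj => hτX j (by simp [hj])
    have ih := ih hτX' fun τ' hτ'X hτ' => by
      have := hτ (τ' ++ [i]) (by simpa using fun j hj => hj.elim (hτ'X j) (· ▸ hiX))
        (by simp [wordProd_append, hτ'])
      simpa using this
    rw [wordProd_append, wordProd_singleton, ← mul_assoc, List.length_append,
      List.length_singleton]
    rcases cs.length_mul_simple (w * π τ) i with hup | hdown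
    · omega
    exfalso
    obtain ⟨ω, hω, rfl⟩ := cs.exists_isReduced w
    obtain ⟨j, hj, hdel⟩ := cs.exists_wordProd_eraseIdx_eq_mul_simple (ω := ω ++ τ) (i := i)
      (by rw [wordProd_append]; omega)
    rw [wordProd_append] at hdel
    rcases lt_or_ge j ω.length with hjω | hjω
    · rw [List.eraseIdx_append_of_lt_length hjω, wordProd_append] at hdel
      have hconj : π τ * s i * (π τ)⁻¹ ∈ cs.parabolic X :=
        mul_mem (mul_mem (cs.wordProd_mem_parabolic hτX') (cs.simple_mem_parabolic hiX))
          (inv_mem (cs.wordProd_mem_parabolic hτX'))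
      have hmin := hw _ hconj
      rw [show π ω * (π τ * s i * (π τ)⁻¹) = π (ω.eraseIdx j) by
        rw [← mul_inv_eq_iff_eq_mul.mpr hdel.symm]; group] at hmin
      exact absurd hmin (not_le.mpr (cs.length_wordProd_eraseIdx_lt hω hjω))
    · rw [List.eraseIdx_append_of_length_le hjω, wordProd_append, mul_assoc,
        mul_right_inj] at hdel
      have hmin := hτ (τ.eraseIdx (j - ω.length))
        (fun k hk => hτX k (by simp [List.mem_of_mem_eraseIdx hk]))
        (by rw [hdel, wordProd_append, wordProd_singleton])
      have := List.length_eraseIdx_le τ (j - ω.length)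
      simp only [List.length_append, List.length_singleton] at hmin
      omega

theorem length_mul_eq_add_of_forall_length_le {X : Set B} {w v : W}
    (hw : ∀ u ∈ cs.parabolic X, ℓ w ≤ ℓ (w * u)) (hv : v ∈ cs.parabolic X) :
    ℓ (w * v) = ℓ w + ℓ v := by
  obtain ⟨τ, hτX, rfl, hτ⟩ := cs.exists_shortest_word_of_mem_parabolic hv
  have hlen := cs.length_mul_wordProd_of_shortest (w := 1) (by simp) hτX hτ
  rw [one_mul, length_one, zero_add] at hlen
  rw [cs.length_mul_wordProd_of_shortest hw hτX hτ, hlen]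

theorem eq_of_forall_length_le {X : Set B} {w w' : W}
    (hw : ∀ u ∈ cs.parabolic X, ℓ w ≤ ℓ (w * u)) (hw' : ∀ u ∈ cs.parabolic X, ℓ w' ≤ ℓ (w' * u))
    (h : w⁻¹ * w' ∈ cs.parabolic X) : w = w' := by
  have hadd := cs.length_mul_eq_add_of_forall_length_le hw h
  have hle := hw' _ (inv_mem h)
  rw [mul_inv_cancel_left] at hadd
  rw [mul_inv_rev, inv_inv, mul_inv_cancel_left] at hle
  exact inv_mul_eq_one.mp (cs.length_eq_zero_iff.mp (by omega))

def minimalCosetReps (X Y : Set B) : Set W :=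
  {w | w ∈ cs.parabolic X ∧ ∀ v ∈ cs.parabolic Y, ℓ w ≤ ℓ (w * v)}

theorem length_mul_of_mem_minimalCosetReps {X X' Y : Set B} {w v : W}
    (hw : w ∈ cs.minimalCosetReps X X') (hv : v ∈ cs.minimalCosetReps X' Y) :
    ℓ (w * v) = ℓ w + ℓ v :=
  cs.length_mul_eq_add_of_forall_length_le hw.2 hv.1

theorem bijOn_mul_minimalCosetReps {X X' Y : Set B} (hY : Y ⊆ X') (hX' : X' ⊆ X) :
    Set.BijOn (fun p : W × W => p.1 * p.2)
      (cs.minimalCosetReps X X' ×ˢ cs.minimalCosetReps X' Y) (cs.minimalCosetReps X Y) := by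
  refine ⟨?_, ?_, ?_⟩
  · rintro ⟨w, v⟩ ⟨hw, hv⟩
    refine ⟨mul_mem hw.1 (cs.parabolic_mono hX' hv.1), fun x hx => ?_⟩
    have h1 := cs.length_mul_eq_add_of_forall_length_le hw.2
      (mul_mem hv.1 (cs.parabolic_mono hY hx))
    have := hv.2 x hx
    rw [cs.length_mul_of_mem_minimalCosetReps hw hv, mul_assoc, h1]
    omega
  · rintro ⟨w, v⟩ ⟨hw, hv⟩ ⟨w', v'⟩ ⟨hw', hv'⟩ (h : w * v = w' * v')
    have hww' : w = w' := cs.eq_of_forall_length_le hw.2 hw'.2 <| by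
      rw [show w⁻¹ * w' = v * v'⁻¹ by
        rw [inv_mul_eq_iff_eq_mul, ← mul_assoc, h, mul_inv_cancel_right]]
      exact mul_mem hv.1 (inv_mem hv'.1)
    subst hww'
    rw [mul_left_cancel h]
  · intro u hu
    obtain ⟨p, hp, hmin⟩ := cs.exists_shortest_in_coset X' u
    refine ⟨(u * p, p⁻¹), ⟨⟨mul_mem hu.1 (cs.parabolic_mono hX' hp), hmin⟩,
      inv_mem hp, fun x hx => ?_⟩, by simp⟩
    show ℓ p⁻¹ ≤ ℓ (p⁻¹ * x)
    have h1 := cs.length_mul_eq_add_of_forall_length_le hmin (inv_mem hp)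
    have h2 := cs.length_mul_eq_add_of_forall_length_le hmin
      (mul_mem (inv_mem hp) (cs.parabolic_mono hY hx))
    have := hu.2 x hx
    rw [mul_inv_cancel_right] at h1
    rw [← mul_assoc, mul_inv_cancel_right] at h2
    omega

end CoxeterSystem

theorem IsMatsumotoSection.map_mul {B W : Type*} [Group W] {M : CoxeterMatrix B}
    {cs : CoxeterSystem M W} {ψ : W → ArtinGroup M} (hψ : IsMatsumotoSection cs ψ) {w v : W}
    (h : cs.length (w * v) = cs.length w + cs.length v) : ψ (w * v) = ψ w * ψ v := by
  obtain ⟨ω, hω, rfl⟩ := cs.exists_isReduced w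
  obtain ⟨ω', hω', rfl⟩ := cs.exists_isReduced v
  have hred : cs.IsReduced (ω ++ ω') := by
    rw [CoxeterSystem.IsReduced, cs.wordProd_append, h, hω.eq, hω'.eq, List.length_append]
  rw [hψ _ _ hred (cs.wordProd_append ω ω'), hψ _ _ hω rfl, hψ _ _ hω' rfl, List.map_append,
    List.prod_append]

namespace Salvetti

variable {B W : Type*} [Group W] {M : CoxeterMatrix B} (cs : CoxeterSystem M W)
  (ψ : W → ArtinGroup M) {Mod : Type*} [AddCommGroup Mod]
  (lam : ArtinGroup M →* Multiplicative (AddAut Mod))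

noncomputable def cosetTerm (w : W) : Mod →+ Mod :=
  (-1 : ℤ) ^ cs.length w • (Multiplicative.toAdd (lam (ψ w))).toAddMonoidHom

noncomputable def cosetSum (X Y : Set B) : Mod →+ Mod :=
  ∑ᶠ w ∈ cs.minimalCosetReps X Y, cosetTerm cs ψ lam w

variable {cs ψ lam}

theorem cosetTerm_mul (hψ : IsMatsumotoSection cs ψ) {w v : W}
    (h : cs.length (w * v) = cs.length w + cs.length v) (x : Mod) :
    cosetTerm cs ψ lam w (cosetTerm cs ψ lam v x) = cosetTerm cs ψ lam (w * v) x := by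
  simp only [cosetTerm, AddMonoidHom.smul_apply, AddEquiv.coe_toAddMonoidHom, map_zsmul,
    smul_smul, ← pow_add, hψ.map_mul h, map_mul, toAdd_mul, AddAut.add_apply]
  rw [add_comm, h]

theorem cosetSum_apply {X Y : Set B} (h : (cs.minimalCosetReps X Y).Finite) (x : Mod) :
    cosetSum cs ψ lam X Y x = ∑ᶠ w ∈ cs.minimalCosetReps X Y, cosetTerm cs ψ lam w x :=
  (AddMonoidHom.eval x).map_finsum_mem _ h

theorem cosetSum_comp (hψ : IsMatsumotoSection cs ψ) {X X' Y : Set B} (hY : Y ⊆ X')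
    (hX' : X' ⊆ X) (hX : (cs.parabolic X : Set W).Finite) (x : Mod) :
    cosetSum cs ψ lam X X' (cosetSum cs ψ lam X' Y x) = cosetSum cs ψ lam X Y x := by
  have hfin : ∀ {Z Z' : Set B}, Z ⊆ X → (cs.minimalCosetReps Z Z').Finite :=
    fun hZ => hX.subset fun w hw => cs.parabolic_mono hZ hw.1
  rw [cosetSum_apply (hfin hX'), cosetSum_apply (hfin subset_rfl),
    cosetSum_apply (hfin subset_rfl),
    ← finsum_mem_eq_of_bijOn (f := fun p => cosetTerm cs ψ lam p.1 (cosetTerm cs ψ lam p.2 x)) _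
      (cs.bijOn_mul_minimalCosetReps hY hX') fun p hp =>
        cosetTerm_mul hψ (cs.length_mul_of_mem_minimalCosetReps hp.1 hp.2) x,
    finsum_mem_set_prod (hfin subset_rfl) (hfin hX') fun w v =>
      cosetTerm cs ψ lam w (cosetTerm cs ψ lam v x)]
  exact finsum_mem_congr rfl fun w _ => (cosetTerm cs ψ lam w).map_finsum_mem _ (hfin hX')

variable [LinearOrder B]

/-- `(-1) ^ (σ(s, V ∖ {s}) + 1)`. -/
def salSign (V : Finset B) (s : B) : ℤ := (-1) ^ (((V.erase s).filter (fun t => t < s)).card + 1)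

theorem salSign_mul_salSign_swap {V : Finset B} {s t : B} (hs : s ∈ V) (ht : t ∈ V)
    (hst : s ≠ t) :
    salSign V s * salSign (V.erase s) t = -(salSign V t * salSign (V.erase t) s) := by
  set T := (V.erase s).erase t
  have hTs : V.erase s = insert t T :=
    (Finset.insert_erase (Finset.mem_erase.mpr ⟨hst.symm, ht⟩)).symm
  have hTt : V.erase t = insert s T := by
    rw [show T = (V.erase t).erase s from Finset.erase_right_comm]
    exact (Finset.insert_erase (Finset.mem_erase.mpr ⟨hst, hs⟩)).symm
  have hsT : s ∉ T := by simp [T]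
  have htT : t ∉ T := by simp [T]
  simp only [salSign, hTs, hTt, Finset.erase_insert hsT, Finset.erase_insert htT,
    Finset.filter_insert]
  rcases hst.lt_or_gt with h | h <;>
    simp [h, h.not_gt, Finset.card_insert_of_notMem, htT, hsT, pow_succ, mul_comm]

theorem salD_apply (c : SalC cs Mod) (U : SalIndex cs) :
    salD cs ψ lam c U = ∑ s ∈ U.1, salSign U.1 s •
      cosetSum cs ψ lam ↑U.1 ↑(U.1.erase s) (c ⟨U.1.erase s, salIndex_erase cs U s⟩) := by
  refine Finset.sum_congr rfl fun s hs => ?_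
  have hU : (insert s ↑(U.1.erase s) : Set B) = ↑U.1 := by
    rw [← Finset.coe_insert, Finset.insert_erase hs]
  rw [cosetSum_apply (U.2.subset fun w hw => hw.1)]
  simp only [minCosetReps, ← hU]
  rfl

theorem salD_salD_apply (hψ : IsMatsumotoSection cs ψ) (c : SalC cs Mod) (U : SalIndex cs) :
    salD cs ψ lam (salD cs ψ lam c) U = ∑ s ∈ U.1, ∑ t ∈ U.1.erase s,
      (salSign U.1 s * salSign (U.1.erase s) t) • cosetSum cs ψ lam ↑U.1 ↑((U.1.erase s).erase t)
        (c ⟨(U.1.erase s).erase t, salIndex_erase cs ⟨U.1.erase s, salIndex_erase cs U s⟩ t⟩) := by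
  rw [salD_apply]
  refine Finset.sum_congr rfl fun s _ => ?_
  rw [salD_apply (U := ⟨U.1.erase s, salIndex_erase cs U s⟩), map_sum, Finset.smul_sum]
  refine Finset.sum_congr rfl fun t _ => ?_
  rw [map_zsmul, smul_smul, cosetSum_comp hψ (Finset.coe_subset.mpr (Finset.erase_subset _ _))
    (Finset.coe_subset.mpr (Finset.erase_subset _ _)) U.2]

end Salvetti

theorem salvetti_is_cochain_complex_general
    {B W : Type*} [LinearOrder B] [Group W] {M : CoxeterMatrix B}
    (cs : CoxeterSystem M W) (ψ : W → ArtinGroup M)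
    (hψ : IsMatsumotoSection cs ψ)
    {Mod : Type*} [AddCommGroup Mod] (lam : ArtinGroup M →* Multiplicative (AddAut Mod))
    (c : SalC cs Mod) :
    salD cs ψ lam (salD cs ψ lam c) = 0 := by
  funext U
  rw [Salvetti.salD_salD_apply hψ]
  refine Finset.sum_sum_erase_eq_zero_of_antisymm _ _ fun s hs t ht hst => ?_
  rw [Salvetti.salSign_mul_salSign_swap hs ht hst, neg_smul]
  simp_rw [Finset.erase_right_comm (s := U.1) (a := t), neg_neg]

theorem salvetti_is_cochain_complex
    {B W : Type*} [LinearOrder B] [Finite B] [Group W] {M : CoxeterMatrix B}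
    (cs : CoxeterSystem M W) (ψ : W → ArtinGroup M)
    (hψ : IsMatsumotoSection cs ψ)
    {Mod : Type*} [AddCommGroup Mod] (lam : ArtinGroup M →* Multiplicative (AddAut Mod))
    (c : SalC cs Mod) :
    salD cs ψ lam (salD cs ψ lam c) = 0 :=
  salvetti_is_cochain_complex_general cs ψ hψ lam c
end

section
/- Let n ≥ 2 and let 1 = d_1 < d_2 < ⋯ < d_r = n be all the (positive) divisors of n. Then for every k with 1 ≤ k < r, in the Laurent polynomial ring L = ℚ[q, q^{−1}] the ideal generated by the Gaussian binomials [n choose d_1]_q, [n choose d_2]_q, …, [n choose d_k]_q equals the principal ideal generated by the product ∏_{j=k+1}^{r} φ_{d_j}(q) of the cyclotomic polynomials indexed by the remaining divisors of n. -/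
/-!
STATEMENT 11: Let 1 = d_1 < ⋯ < d_r = n be the divisors of n.  For 1 ≤ k < r, in
L = ℚ[q,q⁻¹] the ideal ([n choose d_1]_q, …, [n choose d_k]_q) equals the principal
ideal (∏_{j=k+1}^{r} φ_{d_j}(q)).  (We describe the first k divisors as the divisors
d ≤ m, where m = d_k is any divisor of n with m < n, and characterize the Gaussian
binomial g d = [n choose d]_q by the identity g d · [d]_q! · [n−d]_q! = [n]_q!.)
-/

open Polynomial

/-- The q-analogue `[m]_q = 1 + q + ⋯ + q^{m−1}` in `ℚ[q]`. -/
noncomputable def qInt (m : ℕ) : ℚ[X] := ∑ j ∈ Finset.range m, (X : ℚ[X]) ^ j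

/-- The q-factorial `[n]_q! = ∏_{i=1}^{n} [i]_q` in `ℚ[q]`. -/
noncomputable def qFact (n : ℕ) : ℚ[X] := ∏ i ∈ Finset.range n, qInt (i + 1)

/-!
Since `[N]_q = ∏_{1 < h ∣ N} φ_h`, the polynomial `φ_h` (`h > 1`) occurs in `[N]_q!` with
multiplicity `⌊N/h⌋`, hence in `[n choose d]_q` with multiplicity `⌊n/h⌋ - ⌊d/h⌋ - ⌊(n-d)/h⌋`. For `h ∣ n` this
is positive when `h ∤ d`, and it vanishes for `d = h`. So `P = ∏_{m < h ∣ n} φ_h` divides each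
generator `[n choose d]_q` (`d ∣ n`, `d ≤ m`). Conversely, the ideal of those `x` with `P x` in the
span of the generators contains `[n]_q / P = ∏_{1 < h ≤ m, h ∣ n} φ_h` and, for each such `h`, the
element `[n choose h]_q / P`, which is prime to `φ_h`; hence it is the unit ideal and `P` lies in
the span. Everything happens in `ℚ[q]` and is then extended to `ℚ[q, q⁻¹]`.
-/

theorem Ideal.mem_of_mul_prod_mem {R ι : Type*} [CommSemiring R] {J : Ideal R} {p : R}
    {s : Finset ι} (q : ι → R) (hprod : p * ∏ i ∈ s, q i ∈ J)
    (hcop : ∀ i ∈ s, ∃ b, p * b ∈ J ∧ IsCoprime (q i) b) : p ∈ J := by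
  let K : Ideal R := Submodule.comap (LinearMap.mulLeft R p) J
  have hK : ∀ x, x ∈ K ↔ p * x ∈ J := fun _ => Iff.rfl
  have htop : K ⊔ ∏ i ∈ s, span {q i} = ⊤ := sup_prod_eq_top fun i hi => by
    obtain ⟨b, hb, hqb⟩ := hcop i hi
    rw [eq_top_iff, ← isCoprime_iff_sup_eq.mp ((isCoprime_span_singleton_iff _ _).mpr hqb.symm)]
    exact sup_le_sup_right ((span_singleton_le_iff_mem _).mpr ((hK b).mpr hb)) _
  rw [prod_span_singleton,
    sup_eq_left.mpr ((span_singleton_le_iff_mem _).mpr ((hK _).mpr hprod))] at htop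
  simpa using (hK 1).mp (htop ▸ Submodule.mem_top)

theorem Nat.div_add_sub_div_lt_div {n h d : ℕ} (hh : h ∣ n) (hd : ¬ h ∣ d) (hdn : d ≤ n) :
    d / h + (n - d) / h < n / h := by
  have hpos : 0 < h := Nat.pos_of_ne_zero (by rintro rfl; simp_all)
  have hcarry : h ≤ d % h + (n - d) % h := by
    refine Nat.le_of_dvd ?_ ?_
    · have := Nat.pos_of_ne_zero (mt Nat.dvd_of_mod_eq_zero hd)
      omega
    · rw [Nat.dvd_iff_mod_eq_zero, ← Nat.add_mod, Nat.add_sub_cancel' hdn]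
      exact Nat.mod_eq_zero_of_dvd hh
  have key := Nat.add_div (a := d) (b := n - d) hpos
  rw [Nat.add_sub_cancel' hdn, if_pos hcarry] at key
  omega

theorem qInt_eq_prod_cyclotomic {N : ℕ} (hN : 0 < N) :
    qInt N = ∏ h ∈ N.divisors.erase 1, cyclotomic h ℚ :=
  (prod_cyclotomic_eq_geom_sum hN ℚ).symm

theorem qFact_succ (N : ℕ) : qFact (N + 1) = qFact N * qInt (N + 1) :=
  Finset.prod_range_succ _ _

theorem qFact_eq_prod_cyclotomic_pow {N M : ℕ} (hNM : N ≤ M) :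
    qFact N = ∏ h ∈ Finset.Ioc 1 M, cyclotomic h ℚ ^ (N / h) := by
  induction N with
  | zero => simp [qFact]
  | succ N ih =>
    have hdiv : (N + 1).divisors.erase 1 = (Finset.Ioc 1 M).filter (· ∣ N + 1) := by
      ext h
      simp only [Finset.mem_erase, Nat.mem_divisors, Finset.mem_filter, Finset.mem_Ioc]
      constructor
      · rintro ⟨h1, hh, -⟩
        have := Nat.pos_of_dvd_of_pos hh N.succ_pos
        exact ⟨⟨by omega, (Nat.le_of_dvd N.succ_pos hh).trans hNM⟩, hh⟩
      · rintro ⟨⟨h1, -⟩, hh⟩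
        exact ⟨by omega, hh, N.succ_ne_zero⟩
    rw [qFact_succ, ih (by omega), qInt_eq_prod_cyclotomic N.succ_pos, hdiv, Finset.prod_filter,
      ← Finset.prod_mul_distrib]
    refine Finset.prod_congr rfl fun h _ => ?_
    rw [Nat.succ_div]
    split_ifs <;> simp [pow_succ]

theorem qFact_ne_zero (N : ℕ) : qFact N ≠ 0 := by
  rw [qFact_eq_prod_cyclotomic_pow le_rfl]
  exact Finset.prod_ne_zero_iff.mpr fun h _ => pow_ne_zero _ (cyclotomic_ne_zero h ℚ)

noncomputable def gaussBinom (n d : ℕ) : ℚ[X] :=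
  ∏ h ∈ Finset.Ioc 1 n, cyclotomic h ℚ ^ (n / h - d / h - (n - d) / h)

theorem gaussBinom_mul_qFact_mul_qFact {n d : ℕ} (hdn : d ≤ n) :
    gaussBinom n d * (qFact d * qFact (n - d)) = qFact n := by
  rw [qFact_eq_prod_cyclotomic_pow hdn, qFact_eq_prod_cyclotomic_pow (n.sub_le d),
    qFact_eq_prod_cyclotomic_pow le_rfl, gaussBinom, ← Finset.prod_mul_distrib,
    ← Finset.prod_mul_distrib]
  refine Finset.prod_congr rfl fun h _ => ?_
  have : d / h + (n - d) / h ≤ (d + (n - d)) / h := Nat.div_add_div_le_add_div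
  rw [Nat.add_sub_cancel' hdn] at this
  rw [← pow_add, ← pow_add]
  congr 1
  omega

theorem gaussBinom_one {n : ℕ} (hn : 0 < n) : gaussBinom n 1 = qInt n := by
  obtain ⟨k, rfl⟩ : ∃ k, n = k + 1 := ⟨n - 1, by omega⟩
  have h := gaussBinom_mul_qFact_mul_qFact (n := k + 1) (d := 1) (by omega)
  have hone : qFact 1 = 1 := by simp [qFact, qInt]
  rw [hone, one_mul, Nat.add_sub_cancel_right, qFact_succ] at h
  exact mul_left_cancel₀ (qFact_ne_zero k) (by rw [mul_comm, h])

theorem prod_cyclotomic_dvd_gaussBinom {n d : ℕ} {s : Finset ℕ} (hdn : d ≤ n)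
    (hs : ∀ h ∈ s, 1 < h ∧ h ∣ n ∧ ¬ h ∣ d) : ∏ h ∈ s, cyclotomic h ℚ ∣ gaussBinom n d := by
  calc ∏ h ∈ s, cyclotomic h ℚ
      ∣ ∏ h ∈ s, cyclotomic h ℚ ^ (n / h - d / h - (n - d) / h) :=
        Finset.prod_dvd_prod_of_dvd _ _ fun h hh => by
          obtain ⟨-, hhn, hhd⟩ := hs h hh
          have := Nat.div_add_sub_div_lt_div hhn hhd hdn
          exact dvd_pow_self _ (by omega)
    _ ∣ gaussBinom n d := by
        refine Finset.prod_dvd_prod_of_subset _ _ _ fun h hh => ?_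
        obtain ⟨h1, hhn, hhd⟩ := hs h hh
        have hn : 0 < n := Nat.pos_of_ne_zero fun hn0 => hhd (by simp_all)
        exact Finset.mem_Ioc.mpr ⟨h1, Nat.le_of_dvd hn hhn⟩

theorem not_cyclotomic_dvd_gaussBinom_self {n h : ℕ} (hpos : 0 < h) :
    ¬ cyclotomic h ℚ ∣ gaussBinom n h := by
  have hprime : Prime (cyclotomic h ℚ) := (cyclotomic.irreducible_rat hpos).prime
  rw [gaussBinom, hprime.dvd_finsetProd_iff]
  rintro ⟨h', hh', hdvd⟩
  obtain rfl | hne := eq_or_ne h' h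
  · have hhn := (Finset.mem_Ioc.mp hh').2
    have := Nat.div_eq_sub_div hpos hhn
    rw [Nat.div_self hpos, show n / h' - 1 - (n - h') / h' = 0 by omega, pow_zero] at hdvd
    exact hprime.not_isUnit (isUnit_of_dvd_one hdvd)
  · exact hprime.not_isUnit ((cyclotomic.isCoprime_rat hne.symm).isUnit_of_dvd' dvd_rfl
      (hprime.dvd_of_dvd_pow hdvd))

theorem prod_cyclotomic_dvd_gaussBinom_of_dvd {n m d : ℕ} (hn : 0 < n) (hd : d ∣ n) (hdm : d ≤ m) :
    ∏ h ∈ n.divisors.filter (m < ·), cyclotomic h ℚ ∣ gaussBinom n d :=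
  prod_cyclotomic_dvd_gaussBinom (Nat.le_of_dvd hn hd) fun h hh => by
    obtain ⟨⟨hhn, -⟩, hmh⟩ := Finset.mem_filter.mp hh |>.imp_left Nat.mem_divisors.mp
    have hdpos := Nat.pos_of_dvd_of_pos hd hn
    exact ⟨by omega, hhn, fun hhd => absurd (Nat.le_of_dvd hdpos hhd) (by omega)⟩

theorem gaussBinom_one_eq_prod_cyclotomic_mul {n m : ℕ} (hn : 0 < n) (hm : 0 < m) :
    gaussBinom n 1 = (∏ h ∈ n.divisors.filter (m < ·), cyclotomic h ℚ) *
      ∏ h ∈ (n.divisors.erase 1).filter (· ≤ m), cyclotomic h ℚ := by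
  rw [gaussBinom_one hn, qInt_eq_prod_cyclotomic hn,
    ← Finset.prod_filter_mul_prod_filter_not (n.divisors.erase 1) (m < ·)]
  congr 1
  · rw [Finset.filter_erase, Finset.erase_eq_of_notMem]
    simp only [Finset.mem_filter, not_and, not_lt]
    exact fun _ => hm
  · simp only [not_lt]

theorem span_gaussBinom_eq_span_prod_cyclotomic {n m : ℕ} (hn : 0 < n) (hm : 0 < m) :
    Ideal.span (gaussBinom n '' {d | d ∣ n ∧ d ≤ m}) =
      Ideal.span {∏ h ∈ n.divisors.filter (m < ·), cyclotomic h ℚ} := by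
  set P := ∏ h ∈ n.divisors.filter (m < ·), cyclotomic h ℚ
  have hP : ∀ d, d ∣ n → d ≤ m → P ∣ gaussBinom n d := fun d hd hdm =>
    prod_cyclotomic_dvd_gaussBinom_of_dvd hn hd hdm
  apply le_antisymm
  · rw [Ideal.span_le]
    rintro _ ⟨d, ⟨hd, hdm⟩, rfl⟩
    exact Ideal.mem_span_singleton.mpr (hP d hd hdm)
  · rw [Ideal.span_singleton_le_iff_mem]
    refine Ideal.mem_of_mul_prod_mem (s := (n.divisors.erase 1).filter (· ≤ m))
      (cyclotomic · ℚ) ?_ fun h hh => ?_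
    · exact gaussBinom_one_eq_prod_cyclotomic_mul hn hm ▸
        Ideal.subset_span ⟨1, ⟨one_dvd n, hm⟩, rfl⟩
    · simp only [Finset.mem_filter, Finset.mem_erase, Nat.mem_divisors] at hh
      obtain ⟨⟨hh1, hhn, -⟩, hhm⟩ := hh
      have hpos := Nat.pos_of_dvd_of_pos hhn hn
      obtain ⟨b, hb⟩ := hP h hhn hhm
      refine ⟨b, hb ▸ Ideal.subset_span ⟨h, ⟨hhn, hhm⟩, rfl⟩, ?_⟩
      rw [(cyclotomic.irreducible_rat hpos).coprime_iff_not_dvd]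
      exact fun hdvd => not_cyclotomic_dvd_gaussBinom_self hpos (hb ▸ dvd_mul_of_dvd_right hdvd P)

theorem gaussian_binomial_divisor_ideal_general
    (n : ℕ) (hn : 2 ≤ n) (m : ℕ) (hm : m ∣ n)
    (g : ℕ → LaurentPolynomial ℚ)
    (hg : ∀ d : ℕ, d ∣ n →
      g d * ((qFact d).toLaurent * (qFact (n - d)).toLaurent) = (qFact n).toLaurent) :
    Ideal.span {x : LaurentPolynomial ℚ | ∃ d : ℕ, d ∣ n ∧ d ≤ m ∧ x = g d} =
      Ideal.span {(∏ d ∈ n.divisors.filter (fun d => m < d),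
        (Polynomial.cyclotomic d ℚ).toLaurent : LaurentPolynomial ℚ)} := by
  have hn0 : 0 < n := by omega
  have hg_eq : ∀ d, d ∣ n → g d = (gaussBinom n d).toLaurent := fun d hd => by
    refine mul_right_cancel₀ (mul_ne_zero (toLaurent_ne_zero.mpr (qFact_ne_zero d))
      (toLaurent_ne_zero.mpr (qFact_ne_zero (n - d)))) ?_
    rw [hg d hd, ← map_mul, ← map_mul, gaussBinom_mul_qFact_mul_qFact (Nat.le_of_dvd hn0 hd)]
  have hgens : {x | ∃ d, d ∣ n ∧ d ≤ m ∧ x = g d} =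
      toLaurent '' (gaussBinom n '' {d | d ∣ n ∧ d ≤ m}) := by
    ext x
    simp only [Set.mem_ofPred_eq, Set.image_image, Set.mem_image]
    constructor
    · rintro ⟨d, hd, hdm, rfl⟩
      exact ⟨d, ⟨hd, hdm⟩, (hg_eq d hd).symm⟩
    · rintro ⟨d, ⟨hd, hdm⟩, rfl⟩
      exact ⟨d, hd, hdm, (hg_eq d hd).symm⟩
  rw [hgens, ← Ideal.map_span, span_gaussBinom_eq_span_prod_cyclotomic hn0
    (Nat.pos_of_dvd_of_pos hm hn0), Ideal.map_span, Set.image_singleton, map_prod]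

theorem gaussian_binomial_divisor_ideal
    (n : ℕ) (hn : 2 ≤ n) (m : ℕ) (hm : m ∣ n) (hmn : m < n)
    (g : ℕ → LaurentPolynomial ℚ)
    (hg : ∀ d : ℕ, d ∣ n →
      g d * ((qFact d).toLaurent * (qFact (n - d)).toLaurent) = (qFact n).toLaurent) :
    Ideal.span {x : LaurentPolynomial ℚ | ∃ d : ℕ, d ∣ n ∧ d ≤ m ∧ x = g d} =
      Ideal.span {(∏ d ∈ n.divisors.filter (fun d => m < d),
        (Polynomial.cyclotomic d ℚ).toLaurent : LaurentPolynomial ℚ)} :=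
  gaussian_binomial_divisor_ideal_general n hn m hm g hg
end

section
/- Let n ≥ 1 and let h ≥ 2 be a divisor of n+1. Then the cyclotomic polynomial φ_h does not divide the Gaussian binomial [n+1 choose h]_q in ℚ[q]; equivalently, since φ_h is irreducible over ℚ, multiplication by [n+1 choose h]_q is injective on ℚ[q]/(φ_h). -/
/-!
STATEMENT 12: For n ≥ 1 and h ≥ 2 a divisor of n+1, the cyclotomic polynomial φ_h does
not divide the Gaussian binomial [n+1 choose h]_q in ℚ[q]; equivalently, multiplication
by [n+1 choose h]_q is injective on ℚ[q]/(φ_h).  (The Gaussian binomial g is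
characterized by g · [h]_q! · [n+1−h]_q! = [n+1]_q!.)
-/

open Polynomial

noncomputable def cmap (p : ℚ[X]) : ℂ[X] := p.map (algebraMap ℚ ℂ)

lemma cmap_qInt (m : ℕ) : cmap (qInt m) = ∑ j ∈ Finset.range m, (X : ℂ[X]) ^ j := by
  simp [cmap, qInt, Polynomial.map_sum]

lemma cmap_qInt_ne_zero (m : ℕ) (hm : 0 < m) : cmap (qInt m) ≠ 0 := by
  intro h0
  have := congrArg (Polynomial.eval 1) h0
  simp [cmap_qInt, Polynomial.eval_finset_sum] at this
  omega

section aux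
variable {h : ℕ} {ζ : ℂ} (hh : 2 ≤ h) (hζ : IsPrimitiveRoot ζ h)

include hh hζ in
lemma rm_qInt (m : ℕ) (hm : 0 < m) :
    rootMultiplicity ζ (cmap (qInt m)) = if h ∣ m then 1 else 0 := by
  have hζ1 : ζ ≠ 1 := by
    intro h1
    have := hζ.pow_eq_one_iff_dvd 1
    simp [h1] at this
    omega
  have key : cmap (qInt m) * (X - C 1) = X ^ m - C 1 := by
    rw [cmap_qInt]
    simpa using geom_sum_mul (X : ℂ[X]) m
  by_cases hd : h ∣ m
  · rw [if_pos hd]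
    have hne : (X ^ m - C 1 : ℂ[X]) ≠ 0 := by
      intro h0
      have := congrArg (Polynomial.eval 0) h0
      simp [hm.ne'] at this
    have h1 : rootMultiplicity ζ (cmap (qInt m)) + rootMultiplicity ζ (X - C 1 : ℂ[X]) =
        rootMultiplicity ζ ((X : ℂ[X]) ^ m - C 1) := by
      rw [← rootMultiplicity_mul (key ▸ hne), key]
    have h2 : rootMultiplicity ζ (X - C 1 : ℂ[X]) = 0 := by
      apply rootMultiplicity_eq_zero
      simp [IsRoot, sub_eq_zero, hζ1]
    have hsep : Separable ((X : ℂ[X]) ^ m - C 1) := by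
      simpa using separable_X_pow_sub_C (1 : ℂ) (by exact_mod_cast hm.ne') one_ne_zero
    have h3 : rootMultiplicity ζ ((X : ℂ[X]) ^ m - C 1) ≤ 1 :=
      rootMultiplicity_le_one_of_separable hsep ζ
    have h4 : 0 < rootMultiplicity ζ ((X : ℂ[X]) ^ m - C 1) := by
      rw [rootMultiplicity_pos hne]
      simp [IsRoot, sub_eq_zero, (hζ.pow_eq_one_iff_dvd m).mpr hd]
    omega
  · rw [if_neg hd]
    apply rootMultiplicity_eq_zero
    intro hr
    have := congrArg (Polynomial.eval ζ) key
    rw [Polynomial.eval_mul] at this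
    simp only [IsRoot] at hr
    rw [hr, zero_mul] at this
    have hpow : ζ ^ m ≠ 1 := fun he => hd ((hζ.pow_eq_one_iff_dvd m).mp he)
    simp at this
    exact hpow (by linear_combination -this)

include hh hζ in
lemma rm_qFact (m : ℕ) : rootMultiplicity ζ (cmap (qFact m)) = m / h := by
  induction m with
  | zero => simp [qFact, cmap, Nat.zero_div]
  | succ m ih =>
    have hF : cmap (qFact (m + 1)) = cmap (qFact m) * cmap (qInt (m + 1)) := by
      simp [qFact, Finset.prod_range_succ, cmap, Polynomial.map_mul]
    have hFne : cmap (qFact m) ≠ 0 := by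
      simp only [qFact, cmap, Polynomial.map_prod]
      exact Finset.prod_ne_zero_iff.mpr fun i _ => cmap_qInt_ne_zero _ i.succ_pos
    rw [hF, rootMultiplicity_mul (mul_ne_zero hFne (cmap_qInt_ne_zero _ m.succ_pos)), ih,
      rm_qInt hh hζ (m + 1) m.succ_pos, Nat.succ_div]

theorem cyclotomic_not_dvd_gaussian_binomial
    (n h : ℕ) (hn : 1 ≤ n) (hh : 2 ≤ h) (hdvd : h ∣ n + 1)
    (g : ℚ[X]) (hg : g * (qFact h * qFact (n + 1 - h)) = qFact (n + 1)) :
    ¬ (cyclotomic h ℚ ∣ g) ∧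
    Function.Injective (fun x : ℚ[X] ⧸ Ideal.span {cyclotomic h ℚ} =>
      Ideal.Quotient.mk (Ideal.span {cyclotomic h ℚ}) g * x) := by
  have hh0 : 0 < h := by omega
  have hζ : IsPrimitiveRoot (Complex.exp (2 * Real.pi * Complex.I / h)) h :=
    Complex.isPrimitiveRoot_exp h hh0.ne'
  set ζ := Complex.exp (2 * Real.pi * Complex.I / h)
  -- root multiplicity computation
  obtain ⟨k, hk⟩ := hdvd
  have hk1 : 1 ≤ k := by nlinarith
  have hFne : ∀ m, cmap (qFact m) ≠ 0 := by
    intro m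
    simp only [qFact, cmap, Polynomial.map_prod]
    exact Finset.prod_ne_zero_iff.mpr fun i _ => cmap_qInt_ne_zero _ i.succ_pos
  have hgne : cmap g ≠ 0 := by
    intro h0
    apply hFne (n + 1)
    rw [← hg]
    simp only [cmap, Polynomial.map_mul] at h0 ⊢
    rw [h0, zero_mul]
  have hmap : cmap g * (cmap (qFact h) * cmap (qFact (n + 1 - h))) = cmap (qFact (n + 1)) := by
    simp only [cmap, ← Polynomial.map_mul, hg]
  have hrm : rootMultiplicity ζ (cmap g) + (rootMultiplicity ζ (cmap (qFact h)) +
      rootMultiplicity ζ (cmap (qFact (n + 1 - h)))) = rootMultiplicity ζ (cmap (qFact (n + 1))) := by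
    rw [← rootMultiplicity_mul (x := ζ) (mul_ne_zero (hFne h) (hFne (n + 1 - h))),
      ← rootMultiplicity_mul (hmap ▸ hFne (n + 1))]
    rw [hmap]
    
  rw [rm_qFact hh hζ, rm_qFact hh hζ, rm_qFact hh hζ] at hrm
  have e1 : (n + 1) / h = k := by rw [hk, Nat.mul_div_cancel_left _ hh0]
  have e2 : (n + 1 - h) / h = k - 1 := by
    rw [hk, show h * k - h = h * (k - 1) by rw [Nat.mul_sub, mul_one],
      Nat.mul_div_cancel_left _ hh0]
  have e3 : h / h = 1 := Nat.div_self hh0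
  rw [e1, e2, e3] at hrm
  have hrm0 : rootMultiplicity ζ (cmap g) = 0 := by omega
  have hroot : ¬ IsRoot (cmap g) ζ := by
    intro hr
    exact hgne (rootMultiplicity_eq_zero_iff.mp hrm0 hr)
  have hirr : Irreducible (cyclotomic h ℚ) := cyclotomic.irreducible_rat hh0
  have hndvd : ¬ cyclotomic h ℚ ∣ g := by
    intro hdvd'
    apply hroot
    have hdc : cmap (cyclotomic h ℚ) ∣ cmap g := Polynomial.map_dvd _ hdvd'
    have hz : IsRoot (cmap (cyclotomic h ℚ)) ζ := by
      simp only [cmap, map_cyclotomic]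
      exact hζ.isRoot_cyclotomic hh0
    obtain ⟨r, hr⟩ := hdc
    simp [IsRoot, hr, hz.eq_zero]
  refine ⟨hndvd, ?_⟩
  have hmax : (Ideal.span {cyclotomic h ℚ}).IsMaximal :=
    PrincipalIdealRing.isMaximal_of_irreducible hirr
  haveI := hmax
  letI : Field (ℚ[X] ⧸ Ideal.span {cyclotomic h ℚ}) := Ideal.Quotient.field _
  have hgq : Ideal.Quotient.mk (Ideal.span {cyclotomic h ℚ}) g ≠ 0 := by
    rw [Ne, Ideal.Quotient.eq_zero_iff_mem, Ideal.mem_span_singleton]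
    exact hndvd
  exact mul_right_injective₀ hgq
end aux
end
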